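/- The K-linear map Φ : Iuₙ → Iuₙ determined on the basis by Φ(x_{ij}) = x_{n+1−j, n+1−i}, Φ(a_i) = a_{n+1−i}, Φ(b_i) = b_{n+1−i} is a Lie algebra anti-automorphism of Iuₙ: it is a linear bijection satisfying Φ([u, v]) = [Φ(v), Φ(u)] for all u, v ∈ Iuₙ. -/

import Mathlib

/-- Index set for the basis of `Iuₙ`: the off-diagonal pairs indexing the `x_{ij}` (`i ≠ j`),
then the `a_i`'s, then the `b_i`'s. -/
abbrev IuIdx (n : ℕ) : Type := { p : Fin n × Fin n // p.1 ≠ p.2 } ⊕ (Fin n ⊕ Fin n)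

/-- `Iuₙ`: the free `K`-vector space on the basis `{x_{ij} : i ≠ j} ∪ {a_i} ∪ {b_i}`. -/
abbrev Iu (n : ℕ) (K : Type*) [Field K] : Type _ := IuIdx n →₀ K

variable (n : ℕ) (K : Type*) [Field K]

/-- The basis element `x_{ij}` (`i ≠ j`). -/
noncomputable def xE (i j : Fin n) (h : i ≠ j) : Iu n K :=
  Finsupp.single (Sum.inl ⟨(i, j), h⟩) 1

/-- The basis element `a_i`. -/
noncomputable def aE (i : Fin n) : Iu n K := Finsupp.single (Sum.inr (Sum.inl i)) 1

/-- The basis element `b_i`. -/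
noncomputable def bE (i : Fin n) : Iu n K := Finsupp.single (Sum.inr (Sum.inr i)) 1

/-- `x_{ij}` as a total function (junk value `0` when `i = j`). -/
noncomputable def xe (i j : Fin n) : Iu n K := if h : i ≠ j then xE n K i j h else 0

/-- The length `λ(i,j)`: equals `j - i` if `i < j`, and `n - (i - j)` if `i > j`. -/
def lam (n : ℕ) (i j : Fin n) : ℕ := (j - i : Fin n).val

/-- The bracket of `Iuₙ` on basis elements:
`[x_{ij}, x_{kl}] = δ_{jk} x_{il} - δ_{li} x_{kj}` if `λ(i,j) + λ(k,l) < n` and `0` otherwise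
(unless both `j = k` and `l = i`); `[x_{ij}, x_{ji}] = ½(b_i - b_j)`;
`[a_i, x_{jk}] = (δ_{ij} - δ_{ik}) x_{jk}`; `[b_i, x_{jk}] = 0`;
`[a_i, a_j] = [b_i, b_j] = [a_i, b_j] = 0`; extended antisymmetrically. -/
noncomputable def bb : IuIdx n → IuIdx n → Iu n K
  | Sum.inl ⟨(i, j), _⟩, Sum.inl ⟨(k, l), _⟩ =>
      if k = j ∧ l = i then ((2 : K)⁻¹) • (bE n K i - bE n K j)
      else if lam n i j + lam n k l < n then
        (if j = k then xe n K i l else 0) - (if l = i then xe n K k j else 0)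
      else 0
  | Sum.inr (Sum.inl i), Sum.inl ⟨(j, k), _⟩ =>
      (((if i = j then 1 else 0) : K) - ((if i = k then 1 else 0) : K)) • xe n K j k
  | Sum.inl ⟨(j, k), _⟩, Sum.inr (Sum.inl i) =>
      -((((if i = j then 1 else 0) : K) - ((if i = k then 1 else 0) : K)) • xe n K j k)
  | _, _ => 0

/-- The bilinear bracket of `Iuₙ`, extended bilinearly from its values on basis elements. -/
noncomputable def br : Iu n K →ₗ[K] Iu n K →ₗ[K] Iu n K :=
  Finsupp.lift (Iu n K →ₗ[K] Iu n K) K (IuIdx n) fun s =>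
    Finsupp.lift (Iu n K) K (IuIdx n) fun t => bb n K s t

/-- The linear map `Φ`, determined on the basis by `x_{ij} ↦ x_{n+1-j, n+1-i}`,
`a_i ↦ a_{n+1-i}`, `b_i ↦ b_{n+1-i}` (in 0-indexed terms, the index map is `Fin.rev`). -/
noncomputable def Phi : Iu n K →ₗ[K] Iu n K :=
  Finsupp.lift (Iu n K) K (IuIdx n) fun t =>
    match t with
    | Sum.inl ⟨(i, j), _⟩ => xe n K j.rev i.rev
    | Sum.inr (Sum.inl i) => aE n K i.rev
    | Sum.inr (Sum.inr i) => bE n K i.rev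

/-! `Φ` permutes the basis by an involution of the index set, so it is bijective. The bracket
table is symmetric under `i ↦ n + 1 - i` combined with swapping the two arguments, because
`λ(n+1-j, n+1-i) = λ(i, j)`; by bilinearity this is the anti-homomorphism property. -/

namespace Iu

variable {n K}

def revIdx : IuIdx n → IuIdx n
  | Sum.inl ⟨(i, j), h⟩ => Sum.inl ⟨(j.rev, i.rev), fun e => h (Fin.rev_injective e).symm⟩
  | Sum.inr (Sum.inl i) => Sum.inr (Sum.inl i.rev)
  | Sum.inr (Sum.inr i) => Sum.inr (Sum.inr i.rev)

theorem revIdx_involutive : Function.Involutive (revIdx (n := n)) := by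
  rintro (⟨⟨i, j⟩, h⟩ | i | i) <;> simp [revIdx]

theorem lam_rev_rev (i j : Fin n) : lam n j.rev i.rev = lam n i j := by
  have hi := i.isLt
  simp only [lam, Fin.sub_def, Fin.val_rev]
  congr 1
  omega

variable (n K)

theorem Phi_single (t : IuIdx n) (c : K) :
    Phi n K (Finsupp.single t c) = Finsupp.single (revIdx t) c := by
  rw [Phi, Finsupp.lift_apply, Finsupp.sum_single_index (by simp)]
  rcases t with ⟨⟨i, j⟩, h⟩ | i | i
  · simp [revIdx, xe, xE, (Fin.rev_injective.ne h).symm]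
  all_goals simp [revIdx, aE, bE]

theorem Phi_xe (i j : Fin n) : Phi n K (xe n K i j) = xe n K j.rev i.rev := by
  by_cases h : i = j
  · simp [xe, h]
  · simp [xe, xE, h, Ne.symm h, Phi_single, revIdx]

theorem Phi_bE (i : Fin n) : Phi n K (bE n K i) = bE n K i.rev := by
  simp [bE, Phi_single, revIdx]

theorem Phi_involutive : Function.Involutive (Phi n K) := by
  intro u
  have : Phi n K ∘ₗ Phi n K = LinearMap.id :=
    Finsupp.lhom_ext fun t c => by simp [Phi_single, revIdx_involutive t]
  exact LinearMap.congr_fun this u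

theorem br_single_single (s t : IuIdx n) (c d : K) :
    br n K (Finsupp.single s c) (Finsupp.single t d) = (c * d) • bb n K s t := by
  simp [br, Finsupp.lift_apply, Finsupp.sum_single_index, mul_smul]

theorem Phi_bb (s t : IuIdx n) : Phi n K (bb n K s t) = bb n K (revIdx t) (revIdx s) := by
  rcases s with ⟨⟨i, j⟩, hij⟩ | i | i <;> rcases t with ⟨⟨k, l⟩, hkl⟩ | m | m
  · simp only [bb, revIdx, Fin.rev_inj, lam_rev_rev, apply_ite (Phi n K), map_sub, map_smul,
      map_zero, Phi_xe, Phi_bE, @eq_comm _ k j, @eq_comm _ i l, add_comm (lam n k l)]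
    split_ifs with h
    · obtain ⟨rfl, rfl⟩ := h
      rfl
    all_goals rfl
  · simp only [bb, revIdx, Fin.rev_inj, map_smul, Phi_xe, ← neg_smul, neg_sub]
  · simp [bb, revIdx]
  · simp only [bb, revIdx, Fin.rev_inj, map_smul, Phi_xe, ← neg_smul, neg_sub]
  all_goals simp [bb, revIdx]

theorem Phi_br (u v : Iu n K) : Phi n K (br n K u v) = br n K (Phi n K v) (Phi n K u) := by
  have : (br n K).compr₂ (Phi n K) = (br n K).flip.compl₁₂ (Phi n K) (Phi n K) :=
    Finsupp.lhom_ext fun s c => Finsupp.lhom_ext fun t d => by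
      simp [Phi_single, br_single_single, Phi_bb, mul_comm c d]
  exact LinearMap.congr_fun₂ this u v

end Iu

theorem stmt7_general (n : ℕ) (K : Type*) [Field K] :
    Function.Bijective (Phi n K) ∧
    ∀ u v : Iu n K, Phi n K (br n K u v) = br n K (Phi n K v) (Phi n K u) :=
  ⟨(Iu.Phi_involutive n K).bijective, Iu.Phi_br n K⟩

/-- `Φ` is a Lie algebra anti-automorphism of `Iuₙ`. -/
theorem stmt7 (n : ℕ) (hn : 2 ≤ n) (K : Type*) [Field K] (hK : (2 : K) ≠ 0) :
    Function.Bijective (Phi n K) ∧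
    ∀ u v : Iu n K, Phi n K (br n K u v) = br n K (Phi n K v) (Phi n K u) :=
  stmt7_general n K
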